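/- Let m and n be coprime integers with 1 < m < n (so that n' ≥ 1 below), let (m', n') = f(m,n), and let T(0) = 0, T(i) = T(i−1) + len(B_{χ_{m',n'}(i)}) for i ∈ {1,…,n'} be the block boundaries, so that the i-th elementary subsegment of χ_{m,n} occupies positions {T(i−1)+1, …, T(i)}. Then for every i ∈ {1,…,n'} and every j with T(i−1)+1 ≤ j ≤ T(i)−1, one has 𝐚^j <_lex 𝐚^{T(i−1)} and 𝐚^j <_lex 𝐚^{T(i)}, where 𝐚^k are the a-sequences of χ_{m,n} and the index T(0) = 0 is interpreted as n (by n-periodicity). -/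

import Mathlib

/-- `chi m n i = ⌊im/n⌋ − ⌊(i−1)m/n⌋` (floor division over `ℤ`); this formula is
automatically `n`-periodic in `i`. -/
def chi (m n : ℕ) (i : ℤ) : ℤ := Int.fdiv (i * m) n - Int.fdiv ((i - 1) * m) n

/-- The Euclidean step `f(m,n)`. -/
def euclStep (m n : ℕ) : ℕ × ℕ :=
  if 2 * m ≤ n then (m * (n / m + 1) - n, m) else (n - (n - m) * (n / (n - m)), n - m)

/-- The blocks `B₁, B₀` associated to `(m,n)`. -/
def block (m n : ℕ) (b : ℤ) : List ℤ :=
  if 2 * m ≤ n then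
    if b = 1 then List.replicate (n / m - 1) 0 ++ [1] else List.replicate (n / m) 0 ++ [1]
  else
    if b = 1 then 0 :: List.replicate (n / (n - m)) 1
    else 0 :: List.replicate (n / (n - m) - 1) 1

/-- The block boundaries: `T(i) = len(B_{χ_{m',n'}(1)}) + ⋯ + len(B_{χ_{m',n'}(i)})`
where `(m', n') = f(m,n)`; so `T(0) = 0` and `T(i) = T(i−1) + len(B_{χ_{m',n'}(i)})`. -/
def Tb (m n : ℕ) (i : ℕ) : ℕ :=
  ∑ k ∈ Finset.range i,
    (block m n (chi (euclStep m n).1 (euclStep m n).2 ((k : ℤ) + 1))).length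

/-- The a-sequence `𝐚^j` of a (periodic) function `χ : ℤ → ℤ`: `𝐚^j(k) = χ(j − k)`. -/
def aSeq (χ : ℤ → ℤ) (j : ℤ) : ℕ → ℤ := fun k => χ (j - k)

/-- Lexicographic order on sequences `ℕ → ℤ`. -/
def LexLt (f g : ℕ → ℤ) : Prop :=
  ∃ k₀ : ℕ, (∀ k < k₀, f k = g k) ∧ f k₀ < g k₀

/-!
Write `r(x) = x·m mod n`. Then `χ_{m,n}(x) = 1` exactly when `r(x) < m`, and passing from `x` to
`x − 1` subtracts `m` from `r(x)` modulo `n`, the subtraction wrapping around exactly when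
`χ_{m,n}(x) = 1`. So the a-sequences at `p` and `q` agree as long as the gap `r(p) − r(q)` stays
put, and at the first disagreement the index with the smaller residue reads the `1`: a smaller
residue gives a lexicographically larger a-sequence.

The block boundaries satisfy `r(T(i)) = i·m' mod n' < n'`. By coprimality the `n'` boundaries
`T(0), …, T(n' − 1)` have distinct residues, so they use up every residue below `n'`, and every
interior index has residue at least `n'`.
-/

open Finset

section Rotation

variable {m n : ℕ}

theorem sub_one_mul_emod (m n : ℕ) (x : ℤ) :
    (x - 1) * m % n = x * m % n - m + n * chi m n x := by
  rw [chi, Int.fdiv_eq_ediv_of_nonneg _ n.cast_nonneg, Int.fdiv_eq_ediv_of_nonneg _ n.cast_nonneg,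
    Int.emod_def, Int.emod_def]
  ring

theorem chi_eq_ite (hn : 0 < n) (hmn : m ≤ n) (x : ℤ) :
    chi m n x = if x * m % n < m then 1 else 0 := by
  have hn' : (0 : ℤ) < n := by exact_mod_cast hn
  have hmn' : (m : ℤ) ≤ n := by exact_mod_cast hmn
  have key := sub_one_mul_emod m n x
  have := Int.emod_nonneg ((x - 1) * m) hn'.ne'
  have := Int.emod_lt_of_pos ((x - 1) * m) hn'
  have := Int.emod_nonneg (x * m) hn'.ne'
  have := Int.emod_lt_of_pos (x * m) hn'
  split_ifs with h
  · have h₀ : 0 < chi m n x := pos_of_mul_pos_right (a := (n : ℤ)) (by linarith) hn'.le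
    have h₁ : chi m n x < 2 := lt_of_mul_lt_mul_left (a := (n : ℤ)) (by linarith) hn'.le
    omega
  · have h₀ : -1 < chi m n x := lt_of_mul_lt_mul_left (a := (n : ℤ)) (by linarith) hn'.le
    have h₁ : chi m n x < 1 := lt_of_mul_lt_mul_left (a := (n : ℤ)) (by linarith) hn'.le
    omega

theorem chi_eq_zero_or_one (hn : 0 < n) (hmn : m ≤ n) (x : ℤ) :
    chi m n x = 0 ∨ chi m n x = 1 := by
  rw [chi_eq_ite hn hmn]
  split_ifs <;> simp

theorem sum_range_chi (m n i : ℕ) : ∑ k ∈ range i, chi m n (k + 1) = Int.fdiv (i * m) n := by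
  simpa [chi] using sum_range_sub (fun k : ℕ ↦ Int.fdiv (k * m) n) i

theorem sub_mul_emod_sub_eq_of_chi_eq {p q : ℤ} {k : ℕ}
    (hagree : ∀ i < k, chi m n (p - i) = chi m n (q - i)) :
    (p - k) * m % n - (q - k) * m % n = p * m % n - q * m % n := by
  induction k with
  | zero => simp
  | succ k ih =>
    have hp := sub_one_mul_emod m n (p - k)
    have hq := sub_one_mul_emod m n (q - k)
    rw [hagree k k.lt_succ_self] at hp
    rw [Nat.cast_succ, ← sub_sub, ← sub_sub, hp, hq, ← ih fun i hi ↦ hagree i (by omega)]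
    ring

theorem exists_sub_mul_emod_eq (hn : 0 < n) (hcop : m.Coprime n) (q t : ℤ) :
    ∃ k : ℕ, (q - k) * m % n = t % n := by
  obtain ⟨u, v, huv⟩ := Nat.isCoprime_iff_coprime.mpr hcop
  have hnz : (n : ℤ) ≠ 0 := by exact_mod_cast hn.ne'
  refine ⟨((q - t * u) % n).toNat, ?_⟩
  rw [Int.toNat_of_nonneg (Int.emod_nonneg _ hnz)]
  calc (q - (q - t * u) % n) * m ≡ (q - (q - t * u)) * m [ZMOD n] :=
        ((Int.ModEq.refl q).sub (Int.mod_modEq _ _)).mul_right _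
    _ = t + n * (-(t * v)) := by linear_combination t * huv
    _ ≡ t [ZMOD n] := by simp [Int.ModEq]

theorem lexLt_aSeq_chi_of_mul_emod_lt (hmn : m < n) (hcop : m.Coprime n) {p q : ℤ}
    (h : q * m % n < p * m % n) : LexLt (aSeq (chi m n) p) (aSeq (chi m n) q) := by
  have hn : 0 < n := by omega
  have hn' : (0 : ℤ) < n := by exact_mod_cast hn
  -- Otherwise the residue gap never changes, yet some `q - k` has residue `n` minus that gap,
  -- which would put `p - k` at residue `n`.
  have hdiff : ∃ k : ℕ, chi m n (p - k) ≠ chi m n (q - k) := by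
    by_contra! hagree
    obtain ⟨k, hk⟩ := exists_sub_mul_emod_eq hn hcop q (n - (p * m % n - q * m % n))
    have hgap := sub_mul_emod_sub_eq_of_chi_eq (k := k) fun i _ ↦ hagree i
    have := Int.emod_nonneg (q * m) hn'.ne'
    have := Int.emod_lt_of_pos (p * m) hn'
    have := Int.emod_lt_of_pos ((p - k) * m) hn'
    rw [Int.emod_eq_of_lt (a := n - (p * m % n - q * m % n)) (by omega) (by omega)] at hk
    omega
  have hmin : ∀ k < Nat.find hdiff, chi m n (p - k) = chi m n (q - k) :=
    fun k hk ↦ not_not.mp (Nat.find_min hdiff hk)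
  refine ⟨Nat.find hdiff, hmin, ?_⟩
  have hgap := sub_mul_emod_sub_eq_of_chi_eq hmin
  have hne := Nat.find_spec hdiff
  have := Int.emod_nonneg (q * m) hn'.ne'
  have := Int.emod_lt_of_pos (p * m) hn'
  simp only [aSeq]
  rw [chi_eq_ite hn hmn.le, chi_eq_ite hn hmn.le] at hne ⊢
  split_ifs at hne ⊢ <;> omega

end Rotation

section Boundaries

variable {m n : ℕ}

theorem euclStep_of_two_mul_le (h : 2 * m ≤ n) : euclStep m n = (m * (n / m + 1) - n, m) :=
  if_pos h

theorem euclStep_of_lt_two_mul (h : n < 2 * m) :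
    euclStep m n = (n % (n - m), n - m) := by
  rw [euclStep, if_neg (by omega), Nat.mod_eq_sub_mul_div]

theorem euclStep_snd_le (m n : ℕ) : (euclStep m n).2 ≤ m := by
  unfold euclStep
  split_ifs <;> simp only <;> omega

theorem euclStep_snd_pos (hm : 0 < m) (hmn : m < n) : 0 < (euclStep m n).2 := by
  unfold euclStep
  split_ifs <;> simp only <;> omega

theorem euclStep_fst_le_snd (hm : 0 < m) (hmn : m < n) :
    (euclStep m n).1 ≤ (euclStep m n).2 := by
  rcases le_or_gt (2 * m) n with h | h
  · rw [euclStep_of_two_mul_le h]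
    have := Nat.mul_div_le n m
    simp only [mul_add_one]
    omega
  · rw [euclStep_of_lt_two_mul h]
    exact (Nat.mod_lt _ (by omega)).le

theorem length_block_pos (m n : ℕ) (b : ℤ) : 0 < (block m n b).length := by
  unfold block
  split_ifs <;> simp

theorem Tb_strictMono (m n : ℕ) : StrictMono (Tb m n) :=
  strictMono_nat_of_lt_succ fun i ↦ by
    simpa [Tb, sum_range_succ] using length_block_pos m n _

theorem length_block_of_two_mul_le (hm : 0 < m) (h : 2 * m ≤ n) {b : ℤ} (hb : b = 0 ∨ b = 1) :
    ((block m n b).length : ℤ) = (n / m + 1 : ℕ) - b := by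
  have : 2 ≤ n / m := (Nat.le_div_iff_mul_le hm).mpr (by omega)
  rcases hb with rfl | rfl <;> simp [block, h]
  omega

theorem length_block_of_lt_two_mul (hmn : m < n) (h : n < 2 * m) {b : ℤ} (hb : b = 0 ∨ b = 1) :
    ((block m n b).length : ℤ) = (n / (n - m) : ℕ) + b := by
  have : 1 ≤ n / (n - m) := Nat.div_pos (by omega) (by omega)
  rcases hb with rfl | rfl <;> simp [block, show ¬ 2 * m ≤ n by omega]
  omega

theorem Tb_eq_of_length_block (hm : 0 < m) (hmn : m < n) {c s : ℤ}
    (hlen : ∀ b : ℤ, b = 0 ∨ b = 1 → ((block m n b).length : ℤ) = c + s * b) (i : ℕ) :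
    (Tb m n i : ℤ) = c * i + s * Int.fdiv (i * (euclStep m n).1) (euclStep m n).2 := by
  have hchi k := chi_eq_zero_or_one (euclStep_snd_pos hm hmn) (euclStep_fst_le_snd hm hmn) k
  rw [Tb, Nat.cast_sum, sum_congr rfl fun k _ ↦ hlen _ (hchi _), sum_add_distrib,
    ← mul_sum, sum_range_chi]
  simp [mul_comm]

theorem Tb_of_two_mul_le (hm : 0 < m) (h : 2 * m ≤ n) (i : ℕ) :
    (Tb m n i : ℤ) = i * (n / m + 1 : ℕ) - i * (m * (n / m + 1) - n : ℕ) / m := by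
  have hTb := Tb_eq_of_length_block (n := n) hm (by omega) (c := (n / m + 1 : ℕ)) (s := -1)
    (fun b hb ↦ by rw [length_block_of_two_mul_le hm h hb]; ring) i
  rw [hTb, euclStep_of_two_mul_le h, Int.fdiv_eq_ediv_of_nonneg _ (by positivity)]
  ring

theorem Tb_of_lt_two_mul (hmn : m < n) (h : n < 2 * m) (i : ℕ) :
    (Tb m n i : ℤ) = i * (n / (n - m) : ℕ) + i * (n % (n - m) : ℕ) / (n - m : ℕ) := by
  have hTb := Tb_eq_of_length_block (by omega) hmn (c := (n / (n - m) : ℕ)) (s := 1)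
    (fun b hb ↦ by rw [length_block_of_lt_two_mul hmn h hb]; ring) i
  rw [hTb, euclStep_of_lt_two_mul h, Int.fdiv_eq_ediv_of_nonneg _ (by positivity)]
  ring

theorem Tb_euclStep_snd (hm : 0 < m) (hmn : m < n) : Tb m n (euclStep m n).2 = n := by
  zify
  rcases le_or_gt (2 * m) n with h | h
  · have := Nat.lt_mul_div_succ n hm
    rw [Tb_of_two_mul_le hm h, euclStep_of_two_mul_le h, Int.mul_ediv_cancel_left _ (by positivity)]
    push_cast [this.le]
    ring
  · have := Nat.div_add_mod n (n - m)
    rw [Tb_of_lt_two_mul hmn h, euclStep_of_lt_two_mul h, Int.mul_ediv_cancel_left _ (by omega)]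
    zify [hmn.le] at this ⊢
    linear_combination this

theorem Tb_mul_modEq (hm : 0 < m) (hmn : m < n) (i : ℕ) :
    (Tb m n i : ℤ) * m ≡ i * (euclStep m n).1 % (euclStep m n).2 [ZMOD n] := by
  rcases le_or_gt (2 * m) n with h | h
  · have := Nat.lt_mul_div_succ n hm
    rw [Tb_of_two_mul_le hm h, euclStep_of_two_mul_le h]
    refine (Int.modEq_iff_dvd.mpr ⟨i, ?_⟩).symm
    push_cast [this.le, Int.emod_def]
    ring
  · have := Nat.div_add_mod n (n - m)
    rw [Tb_of_lt_two_mul hmn h, euclStep_of_lt_two_mul h]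
    refine (Int.modEq_iff_dvd.mpr ⟨Tb m n i - i, ?_⟩).symm
    rw [Tb_of_lt_two_mul hmn h, Int.emod_def]
    zify [hmn.le] at this ⊢
    linear_combination (-i : ℤ) * this

theorem Tb_mul_mod (hm : 0 < m) (hmn : m < n) (i : ℕ) :
    Tb m n i * m % n = i * (euclStep m n).1 % (euclStep m n).2 := by
  have hlt := Nat.mod_lt (i * (euclStep m n).1) (euclStep_snd_pos hm hmn)
  have hmod : Tb m n i * m ≡ i * (euclStep m n).1 % (euclStep m n).2 [MOD n] :=
    Int.natCast_modEq_iff.mp (by exact_mod_cast Tb_mul_modEq hm hmn i)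
  rw [hmod, Nat.mod_eq_of_lt (hlt.trans_le ((euclStep_snd_le m n).trans hmn.le))]

end Boundaries

section Interior

variable {m n : ℕ}

theorem eq_of_mul_mod_eq_of_coprime (hcop : m.Coprime n) {a b : ℕ} (ha : a < n) (hb : b < n)
    (h : a * m % n = b * m % n) : a = b := by
  have := Nat.ModEq.cancel_right_of_coprime hcop.symm h
  rwa [Nat.ModEq, Nat.mod_eq_of_lt ha, Nat.mod_eq_of_lt hb] at this

theorem exists_Tb_eq_of_mul_mod_lt (hm : 0 < m) (hmn : m < n) (hcop : m.Coprime n) {j : ℕ}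
    (hj : j < n) (hr : j * m % n < (euclStep m n).2) : ∃ b, Tb m n b = j := by
  have hTb_lt (b : ℕ) (hb : b ∈ range (euclStep m n).2) : Tb m n b < n :=
    (Tb_strictMono m n (mem_range.mp hb)).trans_eq (Tb_euclStep_snd hm hmn)
  obtain ⟨b, hb, hjb⟩ := surj_on_of_inj_on_of_card_le (fun b _ ↦ Tb m n b * m % n)
    (fun b _ ↦ mem_range.mpr (Tb_mul_mod hm hmn b ▸ Nat.mod_lt _ (euclStep_snd_pos hm hmn)))
    (fun _ _ hb₁ hb₂ h ↦ (Tb_strictMono m n).injective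
      (eq_of_mul_mod_eq_of_coprime hcop (hTb_lt _ hb₁) (hTb_lt _ hb₂) h))
    le_rfl _ (mem_range.mpr hr)
  exact ⟨b, eq_of_mul_mod_eq_of_coprime hcop (hTb_lt b hb) hj hjb.symm⟩

theorem euclStep_snd_le_mul_mod (hm : 0 < m) (hmn : m < n) (hcop : m.Coprime n) {i j : ℕ}
    (hi : i < (euclStep m n).2) (hij : Tb m n i < j) (hji : j < Tb m n (i + 1)) :
    (euclStep m n).2 ≤ j * m % n := by
  have hmono := Tb_strictMono m n
  have hjn : j < n := hji.trans_le ((hmono.monotone hi).trans_eq (Tb_euclStep_snd hm hmn))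
  by_contra! hlt
  obtain ⟨b, rfl⟩ := exists_Tb_eq_of_mul_mod_lt hm hmn hcop hjn hlt
  have := hmono.lt_iff_lt.mp hij
  have := hmono.lt_iff_lt.mp hji
  omega

end Interior

theorem interior_aSeq_lt_boundary_general (m n : ℕ) (hmn : m < n)
    (hcop : Nat.Coprime m n) :
    ∀ i : ℕ, 1 ≤ i → i ≤ (euclStep m n).2 →
    ∀ j : ℕ, Tb m n (i - 1) + 1 ≤ j → j ≤ Tb m n i - 1 →
      LexLt (aSeq (chi m n) (j : ℤ)) (aSeq (chi m n) ((Tb m n (i - 1) : ℕ) : ℤ)) ∧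
      LexLt (aSeq (chi m n) (j : ℤ)) (aSeq (chi m n) ((Tb m n i : ℕ) : ℤ)) := by
  intro i hi₁ hi₂ j hj₁ hj₂
  have hm : 0 < m := hi₁.trans (hi₂.trans (euclStep_snd_le m n))
  obtain ⟨i, rfl⟩ : ∃ i', i = i' + 1 := ⟨i - 1, by omega⟩
  have hres := euclStep_snd_le_mul_mod hm hmn hcop hi₂ (by simpa using hj₁)
    (by have := Tb_strictMono m n i.lt_succ_self; omega)
  have hlt (b : ℕ) : ((Tb m n b : ℕ) : ℤ) * m % n < (j : ℤ) * m % n := by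
    have := (Tb_mul_mod hm hmn b ▸ Nat.mod_lt _ (euclStep_snd_pos hm hmn)).trans_le hres
    exact_mod_cast this
  exact ⟨lexLt_aSeq_chi_of_mul_emod_lt hmn hcop (hlt _),
    lexLt_aSeq_chi_of_mul_emod_lt hmn hcop (hlt _)⟩

/-- For coprime `1 < m < n`, every index `j` lying strictly inside the
`i`-th elementary subsegment (i.e. `T(i−1)+1 ≤ j ≤ T(i)−1`) satisfies
`𝐚^j <_lex 𝐚^{T(i−1)}` and `𝐚^j <_lex 𝐚^{T(i)}` for the a-sequences of `χ_{m,n}`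
(the index `T(0) = 0` being equivalent to `n` by `n`-periodicity of `chi m n`). -/
theorem interior_aSeq_lt_boundary (m n : ℕ) (hm : 1 < m) (hmn : m < n)
    (hcop : Nat.Coprime m n) :
    ∀ i : ℕ, 1 ≤ i → i ≤ (euclStep m n).2 →
    ∀ j : ℕ, Tb m n (i - 1) + 1 ≤ j → j ≤ Tb m n i - 1 →
      LexLt (aSeq (chi m n) (j : ℤ)) (aSeq (chi m n) ((Tb m n (i - 1) : ℕ) : ℤ)) ∧
      LexLt (aSeq (chi m n) (j : ℤ)) (aSeq (chi m n) ((Tb m n i : ℕ) : ℤ)) :=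
  interior_aSeq_lt_boundary_general m n hmn hcop
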